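/- arXiv:0910.3908 — 4 statements merged into one kernel-verified Lean document; each statement's English description precedes it below -/
import Mathlib

section
/- Let G be a tree on {1,...,p} with edge set E. For subsets K, L ⊆ E and α, β ∈ S_p, if T_K α ⊆ T_L β (inclusion of right cosets of the subgroups generated by the corresponding edge-transpositions), then K ⊆ L. -/
/-!
A right coset `T_K α` contains `α` and `τ_e α`, so `T_K α ⊆ T_L β` puts both `α β⁻¹` and
`τ_e α β⁻¹` in `T_L`, hence `τ_e ∈ T_L` for every `e ∈ K`. Every element of `T_L` moves each
vertex within its connected component of the graph with edge set `L`, so the endpoints of `e`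
are joined by a path of `L`-edges. In a forest every edge is a bridge, so that path must use `e`.
-/

/-- The transposition in the symmetric group determined by an (unordered) edge. -/
def tau {V : Type*} [DecidableEq V] : Sym2 V → Equiv.Perm V :=
  Sym2.lift ⟨fun a b => Equiv.swap a b, fun a b => Equiv.swap_comm a b⟩

/-- The subgroup generated by the transpositions of the edges in `K`. -/
def TK {V : Type*} [DecidableEq V] (K : Set (Sym2 V)) : Subgroup (Equiv.Perm V) :=
  Subgroup.closure (tau '' K)


/-- The right coset `T_K α = {σ * α : σ ∈ T_K}`. -/
def rcoset {V : Type*} [DecidableEq V] (K : Set (Sym2 V)) (α : Equiv.Perm V) :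
    Set (Equiv.Perm V) :=
  (· * α) '' (TK K : Set (Equiv.Perm V))

namespace SimpleGraph

variable {V : Type*} {G H : SimpleGraph V} {a b : V}

theorem IsAcyclic.adj_of_le_of_reachable (hG : G.IsAcyclic) (hHG : H ≤ G) (hab : G.Adj a b)
    (hreach : H.Reachable a b) : H.Adj a b := by
  by_contra hn
  refine isAcyclic_iff_forall_adj_isBridge.mp hG hab (hreach.mono fun v w hvw => ?_)
  refine deleteEdges_adj.mpr ⟨hHG hvw, fun he => hn ?_⟩
  rw [← mem_edgeSet, ← Set.mem_singleton_iff.mp he]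
  exact hvw

theorem reachable_fromEdgeSet_of_mem {s : Set (Sym2 V)} (h : s(a, b) ∈ s) :
    (fromEdgeSet s).Reachable a b := by
  rcases eq_or_ne a b with rfl | hab
  · rfl
  · exact Adj.reachable ((fromEdgeSet_adj s).mpr ⟨h, hab⟩)

end SimpleGraph

theorem Subgroup.le_of_image_mul_right_subset {M : Type*} [Group M] {H H' : Subgroup M}
    {α β : M} (h : (· * α) '' (H : Set M) ⊆ (· * β) '' (H' : Set M)) : H ≤ H' := by
  obtain ⟨τ₀, hτ₀, hα⟩ : ∃ τ₀ ∈ H', τ₀ * β = α := h ⟨1, H.one_mem, one_mul α⟩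
  intro σ hσ
  obtain ⟨τ, hτ, hσα⟩ : ∃ τ ∈ H', τ * β = σ * α := h ⟨σ, hσ, rfl⟩
  have hσ_eq : σ = τ * τ₀⁻¹ :=
    calc σ = σ * α * α⁻¹ := by group
      _ = τ * τ₀⁻¹ := by rw [← hσα, ← hα]; group
  exact hσ_eq ▸ H'.mul_mem hτ (H'.inv_mem hτ₀)

section Transpositions

variable {V : Type*} [DecidableEq V]

@[simp]
theorem tau_mk (a b : V) : tau s(a, b) = Equiv.swap a b := rfl

theorem tau_mem_TK {K : Set (Sym2 V)} {e : Sym2 V} (he : e ∈ K) : tau e ∈ TK K :=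
  Subgroup.subset_closure ⟨e, he, rfl⟩

theorem reachable_apply_of_mem_TK {L : Set (Sym2 V)} {σ : Equiv.Perm V} (hσ : σ ∈ TK L)
    (x : V) : (SimpleGraph.fromEdgeSet L).Reachable x (σ x) := by
  induction hσ using Subgroup.closure_induction generalizing x with
  | mem g hg =>
    obtain ⟨e, he, rfl⟩ := hg
    induction e using Sym2.ind with
    | _ a b =>
      rw [tau_mk, Equiv.swap_apply_def]
      split_ifs with hxa hxb
      · exact hxa ▸ SimpleGraph.reachable_fromEdgeSet_of_mem he
      · exact hxb ▸ SimpleGraph.reachable_fromEdgeSet_of_mem (Sym2.eq_swap ▸ he)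
      · rfl
  | one => rfl
  | mul g g' _ _ ihg ihg' => exact (ihg' x).trans (ihg (g' x))
  | inv g _ ih => simpa using (ih (g⁻¹ x)).symm

end Transpositions

/-- For a tree `G`, inclusion of right cosets `T_K α ⊆ T_L β` forces `K ⊆ L`. -/
theorem stmt8 (p : ℕ) (G : SimpleGraph (Fin p)) (hG : G.IsTree)
    (K L : Set (Sym2 (Fin p))) (hK : K ⊆ G.edgeSet) (hL : L ⊆ G.edgeSet)
    (α β : Equiv.Perm (Fin p)) (h : rcoset K α ⊆ rcoset L β) :
    K ⊆ L := by
  intro e he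
  have hτL : tau e ∈ TK L := Subgroup.le_of_image_mul_right_subset h (tau_mem_TK he)
  induction e using Sym2.ind with
  | _ a b =>
    have hreach : (SimpleGraph.fromEdgeSet L).Reachable a b := by
      simpa using reachable_apply_of_mem_TK hτL a
    have hLG : SimpleGraph.fromEdgeSet L ≤ G :=
      (SimpleGraph.fromEdgeSet_mono hL).trans_eq (SimpleGraph.fromEdgeSet_edgeSet G)
    exact ((SimpleGraph.fromEdgeSet_adj L).mp
      (hG.isAcyclic.adj_of_le_of_reachable hLG (hK he) hreach)).1
end

section
/- Let G be a finite graph with q edges such that every permutation of the edge set E(G) is induced by a graph automorphism of G (i.e., the natural map from Aut(G) to Sym(E(G)) is surjective), G is connected, and q ≥ 2. Then G is isomorphic to the 3-cycle C_3 or to the star K_{1,q}. -/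
/-! If some vertex has two distinct neighbours, an automorphism can send these two edges to any
two distinct edges, so any two edges of the graph meet; if no vertex has two neighbours, a
connected graph has at most one edge and again any two edges meet. Pairwise meeting edges either
all pass through one vertex, which in a connected graph makes it a star, or contain a triangle;
every edge then meets all three sides of the triangle, so the graph is the triangle itself. -/

namespace SimpleGraph

variable {V : Type*} {G : SimpleGraph V}

def EdgesPairwiseMeet (G : SimpleGraph V) : Prop :=
  ∀ ⦃u v u' v' : V⦄, G.Adj u v → G.Adj u' v' → u = u' ∨ u = v' ∨ v = u' ∨ v = v'

theorem Preconnected.exists_adj_of_ne (hG : G.Preconnected) {u v : V} (h : v ≠ u) :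
    ∃ w, G.Adj v w :=
  have p := (hG v u).some
  ⟨_, p.adj_snd (Walk.not_nil_of_ne h)⟩

theorem Walk.eq_or_eq_of_adj_unique (h : ∀ ⦃w p r : V⦄, G.Adj w p → G.Adj w r → p = r)
    {x z : V} (p : G.Walk x z) {y : V} (hxy : G.Adj x y) : z = x ∨ z = y := by
  induction p generalizing y with
  | nil => exact .inl rfl
  | cons hxb _ ih =>
    obtain rfl := h hxb hxy
    exact (ih hxb.symm).symm

theorem Preconnected.edgesPairwiseMeet_of_adj_unique (hG : G.Preconnected)
    (h : ∀ ⦃w p r : V⦄, G.Adj w p → G.Adj w r → p = r) : G.EdgesPairwiseMeet := by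
  intro u v u' _ huv _
  rcases (hG u u').some.eq_or_eq_of_adj_unique h huv with rfl | rfl <;> simp

theorem edgesPairwiseMeet_of_forall_perm_of_adj_adj
    (hsurj : ∀ σ : Equiv.Perm G.edgeSet, ∃ κ : G ≃g G, ∀ e, κ.mapEdgeSet e = σ e)
    {w p r : V} (hwp : G.Adj w p) (hwr : G.Adj w r) (hpr : p ≠ r) : G.EdgesPairwiseMeet := by
  intro a b c d hab hcd
  by_contra! hne
  have hA : (⟨s(w, p), hwp⟩ : G.edgeSet) ≠ ⟨s(w, r), hwr⟩ := fun h =>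
    hpr (Sym2.congr_right.mp (congrArg Subtype.val h))
  have hE : (⟨s(a, b), hab⟩ : G.edgeSet) ≠ ⟨s(c, d), hcd⟩ := fun h => by
    rcases Sym2.eq_iff.mp (congrArg Subtype.val h) with ⟨h', -⟩ | ⟨h', -⟩
    exacts [hne.1 h', hne.2.1 h']
  obtain ⟨σ, hσA, hσB⟩ :=
    MulAction.is_two_pretransitive_iff.mp (Equiv.Perm.isMultiplyPretransitive _ 2) hA hE
  obtain ⟨κ, hκ⟩ := hsurj σ
  have hmem : ∀ e : G.edgeSet, w ∈ (e : Sym2 V) → κ w ∈ (σ e : Sym2 V) := fun e he =>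
    hκ e ▸ Sym2.mem_map.mpr ⟨w, he, rfl⟩
  have hwab := hmem ⟨s(w, p), hwp⟩ (Sym2.mem_mk_left w p)
  have hwcd := hmem ⟨s(w, r), hwr⟩ (Sym2.mem_mk_left w r)
  rw [← Equiv.Perm.smul_def, hσA, Sym2.mem_iff] at hwab
  rw [← Equiv.Perm.smul_def, hσB, Sym2.mem_iff] at hwcd
  grind

theorem Connected.edgesPairwiseMeet_of_forall_perm (hG : G.Connected)
    (hsurj : ∀ σ : Equiv.Perm G.edgeSet, ∃ κ : G ≃g G, ∀ e, κ.mapEdgeSet e = σ e) :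
    G.EdgesPairwiseMeet := by
  by_cases hpath : ∃ w p r, G.Adj w p ∧ G.Adj w r ∧ p ≠ r
  · obtain ⟨w, p, r, hwp, hwr, hpr⟩ := hpath
    exact edgesPairwiseMeet_of_forall_perm_of_adj_adj hsurj hwp hwr hpr
  · push Not at hpath
    exact hG.preconnected.edgesPairwiseMeet_of_adj_unique hpath

namespace EdgesPairwiseMeet

variable (h : G.EdgesPairwiseMeet)
include h

theorem exists_adj_ne {a b u v : V} (hab : G.Adj a b) (huv : G.Adj u v) (hua : u ≠ a)
    (hva : v ≠ a) : ∃ c, G.Adj b c ∧ c ≠ a := by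
  rcases h hab huv with rfl | rfl | rfl | rfl
  · exact absurd rfl hua
  · exact absurd rfl hva
  · exact ⟨v, huv, hva⟩
  · exact ⟨u, huv.symm, hua⟩

theorem exists_triangle [Nonempty V] (hstar : ∀ x, ∃ u v, G.Adj u v ∧ u ≠ x ∧ v ≠ x) :
    ∃ a b c, G.Adj a b ∧ G.Adj b c ∧ G.Adj a c := by
  obtain ⟨a, b, hab, -, -⟩ := hstar (Classical.arbitrary V)
  obtain ⟨c, hbc, hca⟩ :=
    (hstar a).elim fun _ ⟨_, huv, hua, hva⟩ => h.exists_adj_ne hab huv hua hva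
  obtain ⟨d, had, hdb⟩ :=
    (hstar b).elim fun _ ⟨_, huv, hub, hvb⟩ => h.exists_adj_ne hab.symm huv hub hvb
  obtain rfl : c = d := by
    rcases h hbc had with h' | h' | h' | h'
    exacts [absurd h' hab.ne.symm, absurd h'.symm hdb, absurd h' hca, h']
  exact ⟨a, b, c, hab, hbc, had⟩

theorem mem_of_adj_of_triangle {a b c v w : V} (hab : G.Adj a b) (hbc : G.Adj b c)
    (hac : G.Adj a c) (hvw : G.Adj v w) : v = a ∨ v = b ∨ v = c := by
  have := hab.ne; have := hbc.ne; have := hac.ne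
  have := h hvw hab; have := h hvw hbc; have := h hvw hac
  grind

theorem nonempty_iso_cycleGraph_three (hG : G.Preconnected) {a b c : V} (hab : G.Adj a b)
    (hbc : G.Adj b c) (hac : G.Adj a c) : Nonempty (G ≃g cycleGraph 3) := by
  have hV : ∀ v, v = a ∨ v = b ∨ v = c := fun v => by
    by_cases hva : v = a
    · exact .inl hva
    · obtain ⟨w, hvw⟩ := hG.exists_adj_of_ne hva
      exact h.mem_of_adj_of_triangle hab hbc hac hvw
  have htop : G = ⊤ := by
    ext u v
    rcases hV u with rfl | rfl | rfl <;> rcases hV v with rfl | rfl | rfl <;>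
      grind [top_adj, adj_comm, Adj.ne]
  have hcard : Nat.card V = 3 := by
    rw [← Set.ncard_univ, Set.ncard_eq_three]
    exact ⟨a, b, c, hab.ne, hac.ne, hbc.ne, (Set.eq_univ_of_forall fun v => by
      simp only [Set.mem_insert_iff, Set.mem_singleton_iff]; exact hV v).symm⟩
  have : Finite V := Nat.finite_of_card_ne_zero (by omega)
  rw [htop, cycleGraph_three_eq_top]
  exact ⟨Iso.completeGraph (Finite.equivFinOfCardEq hcard)⟩

end EdgesPairwiseMeet

namespace Preconnected

variable (hG : G.Preconnected) {x : V} (hx : ∀ ⦃u v⦄, G.Adj u v → u = x ∨ v = x)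
include hG hx

theorem adj_iff_of_forall_adj {u v : V} : G.Adj u v ↔ u ≠ v ∧ (u = x ∨ v = x) := by
  refine ⟨fun huv => ⟨huv.ne, hx huv⟩, ?_⟩
  rintro ⟨huv, rfl | rfl⟩
  · obtain ⟨w, hvw⟩ := hG.exists_adj_of_ne huv.symm
    rcases hx hvw with h | rfl
    exacts [absurd h.symm huv, hvw.symm]
  · obtain ⟨w, huw⟩ := hG.exists_adj_of_ne huv
    rcases hx huw with h | rfl
    exacts [absurd h huv, huw]

theorem nonempty_iso_completeBipartiteGraph [Finite V] :
    Nonempty (G ≃g completeBipartiteGraph (Fin 1) (Fin (Nat.card G.edgeSet))) := by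
  classical
  have hadj := fun u v => hG.adj_iff_of_forall_adj hx (u := u) (v := v)
  have hnbr : G.neighborSet x = {v | v ≠ x} := by
    ext v
    simp [hadj, eq_comm]
  have hinc : G.incidenceSet x = G.edgeSet := by
    refine Set.sep_eq_self_iff_mem_true.mpr fun e he => ?_
    induction e with
    | _ u v => simpa [eq_comm] using hx he
  let leaves : {v // v ≠ x} ≃ G.edgeSet :=
    ((Equiv.setCongr hnbr).symm.trans (G.incidenceSetEquivNeighborSet x).symm).trans
      (Equiv.setCongr hinc)
  let center : {v // v = x} ≃ Fin 1 := Equiv.ofUnique _ _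
  let star : completeBipartiteGraph {v // v = x} {v // v ≠ x} ≃g G :=
    { Equiv.sumCompl (· = x) with
      map_rel_iff' := by
        intro u v
        rcases u with ⟨u, rfl⟩ | ⟨u, hu⟩ <;> rcases v with ⟨v, hv⟩ | ⟨v, hv⟩ <;>
          grind [completeBipartiteGraph_adj, Equiv.sumCompl_apply_inl, Equiv.sumCompl_apply_inr] }
  exact ⟨star.symm.trans (completeBipartiteGraphCongr center (leaves.trans (Finite.equivFin _)))⟩

end Preconnected

end SimpleGraph

theorem stmt12_general {V : Type*} [Fintype V] (q : ℕ) (G : SimpleGraph V)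
    (hconn : G.Connected) (hq : Nat.card G.edgeSet = q)
    (hsurj : ∀ σ : Equiv.Perm G.edgeSet, ∃ κ : G ≃g G, ∀ e, κ.mapEdgeSet e = σ e) :
    Nonempty (G ≃g SimpleGraph.cycleGraph 3) ∨
      Nonempty (G ≃g completeBipartiteGraph (Fin 1) (Fin q)) := by
  have hmeet := hconn.edgesPairwiseMeet_of_forall_perm hsurj
  by_cases hstar : ∃ x, ∀ ⦃u v⦄, G.Adj u v → u = x ∨ v = x
  · obtain ⟨x, hx⟩ := hstar
    exact .inr (hq ▸ hconn.preconnected.nonempty_iso_completeBipartiteGraph hx)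
  · push Not at hstar
    have := hconn.nonempty
    obtain ⟨a, b, c, hab, hbc, hac⟩ := hmeet.exists_triangle hstar
    exact .inl (hmeet.nonempty_iso_cycleGraph_three hconn.preconnected hab hbc hac)

/-- A connected graph with `q ≥ 2` edges in which every permutation of the edge set
is induced by a graph automorphism is the triangle `C₃` or the star `K_{1,q}`. -/
theorem stmt12 {V : Type*} [Fintype V] (q : ℕ) (G : SimpleGraph V)
    (hconn : G.Connected) (hq : Nat.card G.edgeSet = q) (hq2 : 2 ≤ q)
    (hsurj : ∀ σ : Equiv.Perm G.edgeSet, ∃ κ : G ≃g G, ∀ e, κ.mapEdgeSet e = σ e) :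
    Nonempty (G ≃g SimpleGraph.cycleGraph 3) ∨
      Nonempty (G ≃g completeBipartiteGraph (Fin 1) (Fin q)) :=
  stmt12_general q G hconn hq hsurj
end

section
/- Let G be a connected finite graph with q ≥ 2 edges such that every edge permutation of G extends to a graph automorphism, and suppose G has a vertex j of degree at least 3. Then every edge of G contains j; that is, G is the star K_{1,q}. -/
/-!
Any two distinct edges are the image, under an automorphism inducing a suitable edge permutation,
of two distinct edges at `j`; hence any two distinct edges of `G` share a vertex. An edge `ab`
avoiding `j` would then meet every edge `ju`, forcing every neighbour `u` of `j` into `{a, b}`,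
which contradicts `deg j ≥ 3`.
-/

theorem Equiv.Perm.exists_apply_eq_and_apply_eq {α : Type*} {a b c d : α} (hab : a ≠ b)
    (hcd : c ≠ d) : ∃ σ : Equiv.Perm α, σ a = c ∧ σ b = d := by
  classical
  set τ := Equiv.swap a c
  have hτ : c ≠ τ b := by
    simpa only [τ, Equiv.swap_apply_left] using τ.injective.ne hab
  exact ⟨τ.trans (Equiv.swap (τ b) d), by simp [τ, Equiv.swap_apply_of_ne_of_ne hτ hcd], by simp⟩

namespace SimpleGraph

variable {V : Type*} {G : SimpleGraph V}

theorem Iso.mem_mapEdgeSet (κ : G ≃g G) {v : V} {e : G.edgeSet} (hv : v ∈ (e : Sym2 V)) :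
    κ v ∈ (κ.mapEdgeSet e : Sym2 V) :=
  Sym2.mem_map.mpr ⟨v, hv, rfl⟩

theorem exists_mem_mem_of_forall_perm_edgeSet
    (hsurj : ∀ σ : Equiv.Perm G.edgeSet, ∃ κ : G ≃g G, ∀ e, κ.mapEdgeSet e = σ e)
    {e₀ f₀ : G.edgeSet} {v : V} (h₀ : e₀ ≠ f₀) (he₀ : v ∈ (e₀ : Sym2 V)) (hf₀ : v ∈ (f₀ : Sym2 V))
    {e f : G.edgeSet} (hef : e ≠ f) : ∃ w, w ∈ (e : Sym2 V) ∧ w ∈ (f : Sym2 V) := by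
  obtain ⟨σ, hσe, hσf⟩ := Equiv.Perm.exists_apply_eq_and_apply_eq h₀ hef
  obtain ⟨κ, hκ⟩ := hsurj σ
  refine ⟨κ v, ?_, ?_⟩
  · simpa only [← hσe, ← hκ] using κ.mem_mapEdgeSet he₀
  · simpa only [← hσf, ← hκ] using κ.mem_mapEdgeSet hf₀

theorem degree_le_two_of_forall_adj [Fintype V] [DecidableRel G.Adj] [DecidableEq V] {j a b : V}
    (h : ∀ u, G.Adj j u → u = a ∨ u = b) : G.degree j ≤ 2 := by
  rw [← card_neighborFinset_eq_degree]
  calc (G.neighborFinset j).card ≤ ({a, b} : Finset V).card :=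
        Finset.card_le_card fun u hu => by simpa using h u ((mem_neighborFinset G j u).mp hu)
    _ ≤ 2 := Finset.card_le_two

end SimpleGraph

open SimpleGraph in
theorem stmt15_general {V : Type*} [Fintype V] (G : SimpleGraph V) [DecidableRel G.Adj]
    (hsurj : ∀ σ : Equiv.Perm G.edgeSet, ∃ κ : G ≃g G, ∀ e, κ.mapEdgeSet e = σ e)
    (j : V) (hj : 3 ≤ G.degree j) :
    ∀ e ∈ G.edgeSet, j ∈ e := by
  classical
  obtain ⟨x, hx, y, hy, hxy⟩ := Finset.one_lt_card.mp
    (show 1 < (G.neighborFinset j).card by rw [card_neighborFinset_eq_degree]; omega)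
  rw [mem_neighborFinset] at hx hy
  have hmeet {e f : G.edgeSet} (hef : e ≠ f) : ∃ w, w ∈ (e : Sym2 V) ∧ w ∈ (f : Sym2 V) :=
    exists_mem_mem_of_forall_perm_edgeSet hsurj (e₀ := ⟨s(j, x), hx⟩) (f₀ := ⟨s(j, y), hy⟩)
      (fun h => hxy (Sym2.congr_right.mp (congrArg Subtype.val h))) (Sym2.mem_mk_left j x)
      (Sym2.mem_mk_left j y) hef
  intro e he
  induction e using Sym2.ind with
  | _ a b =>
    by_contra hje
    have hab : ∀ u, G.Adj j u → u = a ∨ u = b := by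
      intro u hu
      have hne : (⟨s(j, u), hu⟩ : G.edgeSet) ≠ ⟨s(a, b), he⟩ := fun h =>
        hje (Subtype.mk.inj h ▸ Sym2.mem_mk_left j u)
      obtain ⟨w, hwj, hwab⟩ := hmeet hne
      rcases Sym2.mem_iff.mp hwj with rfl | rfl
      · exact absurd hwab hje
      · exact Sym2.mem_iff.mp hwab
    have := degree_le_two_of_forall_adj hab
    omega

/-- If `G` is connected with at least 2 edges, every permutation of the edge set is
induced by a graph automorphism, and `G` has a vertex `j` of degree at least 3,
then every edge of `G` contains `j`; that is, `G` is the star with center `j`. -/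
theorem stmt15 {V : Type*} [Fintype V] (G : SimpleGraph V) [DecidableRel G.Adj]
    (hconn : G.Connected) (hq2 : 2 ≤ Nat.card G.edgeSet)
    (hsurj : ∀ σ : Equiv.Perm G.edgeSet, ∃ κ : G ≃g G, ∀ e, κ.mapEdgeSet e = σ e)
    (j : V) (hj : 3 ≤ G.degree j) :
    ∀ e ∈ G.edgeSet, j ∈ e :=
  stmt15_general G hsurj j hj
end

section
/- Let G be a connected graph on {1,...,p} with edge set E. In the poset of equivalence classes of pairs (K, α) with K ⊆ E and α ∈ S_p (with (K,α) = (L,β) iff K = L and T_K α = T_L β, and (K,α) ≤ (L,β) iff K ⊆ L and T_K α ⊆ T_L β), whenever (K,α) ≤ (L,β) with |K| = |L| - 2, there exist exactly two elements (J,γ) with (K,α) ≤ (J,γ) ≤ (L,β) and |J| = |K| + 1. -/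
lemma mem_rcoset_iff {V : Type*} [DecidableEq V] {K : Set (Sym2 V)} {α x : Equiv.Perm V} :
    x ∈ rcoset K α ↔ x * α⁻¹ ∈ TK K := by
  constructor
  · rintro ⟨σ, hσ, rfl⟩; simpa using hσ
  · intro h; exact ⟨x * α⁻¹, h, by group⟩

lemma TK_mono {V : Type*} [DecidableEq V] {K L : Set (Sym2 V)} (h : K ⊆ L) : TK K ≤ TK L :=
  Subgroup.closure_mono (Set.image_mono h)

lemma self_mem_rcoset {V : Type*} [DecidableEq V] (K : Set (Sym2 V)) (α : Equiv.Perm V) :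
    α ∈ rcoset K α :=
  mem_rcoset_iff.2 (by simp [one_mem])

lemma rcoset_subset {V : Type*} [DecidableEq V] {J L : Set (Sym2 V)} {γ β : Equiv.Perm V}
    (hJL : J ⊆ L) (hγ : γ ∈ rcoset L β) : rcoset J γ ⊆ rcoset L β := by
  intro x hx
  rw [mem_rcoset_iff] at *
  have hx' : x * β⁻¹ = (x * γ⁻¹) * (γ * β⁻¹) := by group
  rw [hx']
  exact mul_mem (TK_mono hJL hx) hγ

lemma rcoset_eq_of_mem {V : Type*} [DecidableEq V] {J : Set (Sym2 V)} {γ γ' : Equiv.Perm V}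
    (h : γ ∈ rcoset J γ') : rcoset J γ = rcoset J γ' := by
  have h' : γ' ∈ rcoset J γ := by
    rw [mem_rcoset_iff] at h ⊢
    have : γ' * γ⁻¹ = (γ * γ'⁻¹)⁻¹ := by group
    rw [this]; exact inv_mem h
  exact subset_antisymm (rcoset_subset subset_rfl h) (rcoset_subset subset_rfl h')

/-- The diamond condition for the graphicahedron: between a face `(K,α)` and a face
`(L,β)` two ranks higher there lie exactly two faces (up to the equivalence
`(J,γ) ∼ (J',γ') ↔ J = J' ∧ T_J γ = T_{J'} γ'`). -/
theorem stmt19 (p : ℕ) (G : SimpleGraph (Fin p)) (hconn : G.Connected)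
    (K L : Set (Sym2 (Fin p))) (hK : K ⊆ G.edgeSet) (hL : L ⊆ G.edgeSet)
    (α β : Equiv.Perm (Fin p))
    (hle : K ⊆ L ∧ rcoset K α ⊆ rcoset L β)
    (hcard : K.ncard + 2 = L.ncard) :
    ∃ x y : Set (Sym2 (Fin p)) × Equiv.Perm (Fin p),
      (x.1 ⊆ G.edgeSet ∧ x.1.ncard = K.ncard + 1 ∧
        (K ⊆ x.1 ∧ rcoset K α ⊆ rcoset x.1 x.2) ∧
        (x.1 ⊆ L ∧ rcoset x.1 x.2 ⊆ rcoset L β)) ∧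
      (y.1 ⊆ G.edgeSet ∧ y.1.ncard = K.ncard + 1 ∧
        (K ⊆ y.1 ∧ rcoset K α ⊆ rcoset y.1 y.2) ∧
        (y.1 ⊆ L ∧ rcoset y.1 y.2 ⊆ rcoset L β)) ∧
      ¬ (x.1 = y.1 ∧ rcoset x.1 x.2 = rcoset y.1 y.2) ∧
      (∀ z : Set (Sym2 (Fin p)) × Equiv.Perm (Fin p),
        (z.1 ⊆ G.edgeSet ∧ z.1.ncard = K.ncard + 1 ∧
          (K ⊆ z.1 ∧ rcoset K α ⊆ rcoset z.1 z.2) ∧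
          (z.1 ⊆ L ∧ rcoset z.1 z.2 ⊆ rcoset L β)) →
        ((z.1 = x.1 ∧ rcoset z.1 z.2 = rcoset x.1 x.2) ∨
         (z.1 = y.1 ∧ rcoset z.1 z.2 = rcoset y.1 y.2))) := by
  obtain ⟨hKL, hcos⟩ := hle
  have hLfin : L.Finite := Set.toFinite L
  have hKfin : K.Finite := hLfin.subset hKL
  have hdiff : (L \ K).ncard = 2 := by
    rw [Set.ncard_diff hKL hKfin]; omega
  obtain ⟨e, f, hef, hEF⟩ := Set.ncard_eq_two.1 hdiff
  have heL : e ∈ L := by have : e ∈ L \ K := hEF ▸ (by simp); exact this.1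
  have hfL : f ∈ L := by have : f ∈ L \ K := hEF ▸ (by simp); exact this.1
  have heK : e ∉ K := by have : e ∈ L \ K := hEF ▸ (by simp); exact this.2
  have hfK : f ∉ K := by have : f ∈ L \ K := hEF ▸ (by simp); exact this.2
  have hαL : α ∈ rcoset L β := hcos (self_mem_rcoset K α)
  -- the two middle faces
  have key : ∀ g, g ∈ L → g ∉ K →
      (insert g K ⊆ G.edgeSet ∧ (insert g K).ncard = K.ncard + 1 ∧
        (K ⊆ insert g K ∧ rcoset K α ⊆ rcoset (insert g K) α) ∧
        (insert g K ⊆ L ∧ rcoset (insert g K) α ⊆ rcoset L β)) := by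
    intro g hgL hgK
    refine ⟨?_, ?_, ⟨Set.subset_insert _ _, ?_⟩, ⟨?_, ?_⟩⟩
    · exact Set.insert_subset (hL hgL) hK
    · exact Set.ncard_insert_of_notMem hgK hKfin
    · exact rcoset_subset (Set.subset_insert _ _) (self_mem_rcoset _ _)
    · exact Set.insert_subset hgL hKL
    · exact rcoset_subset (Set.insert_subset hgL hKL) hαL
  refine ⟨(insert e K, α), (insert f K, α), key e heL heK, key f hfL hfK, ?_, ?_⟩
  · rintro ⟨h1, -⟩
    apply hef
    have h1' : insert e K = insert f K := h1
    have : e ∈ insert f K := h1' ▸ Set.mem_insert e K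
    rcases this with h | h
    · exact h
    · exact absurd h heK
  · rintro ⟨z, σ⟩ ⟨hzE, hzcard, ⟨hKz, hcz⟩, hzL, hcz'⟩
    have hzfin : (z : Set (Sym2 (Fin p))).Finite := Set.toFinite _
    have hzdiff : (z \ K).ncard = 1 := by
      rw [Set.ncard_diff hKz hKfin]; omega
    obtain ⟨g, hg⟩ := Set.ncard_eq_one.1 hzdiff
    have hgz : g ∈ z \ K := hg ▸ rfl
    have hgLK : g ∈ L \ K := ⟨hzL hgz.1, hgz.2⟩
    have hz_eq : z = insert g K := by
      apply subset_antisymm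
      · intro a ha
        by_cases haK : a ∈ K
        · exact Set.mem_insert_of_mem _ haK
        · have : a ∈ z \ K := ⟨ha, haK⟩
          rw [hg] at this
          simp at this; simp [this]
      · exact Set.insert_subset hgz.1 hKz
    have hαz : α ∈ rcoset z σ := hcz (self_mem_rcoset K α)
    have hcoset_eq : rcoset z σ = rcoset z α := (rcoset_eq_of_mem hαz).symm
    have hgef : g = e ∨ g = f := by
      have := hEF ▸ hgLK
      simpa using this
    rcases hgef with rfl | rfl
    · left; exact ⟨hz_eq, by rw [hcoset_eq, hz_eq]⟩
    · right; exact ⟨hz_eq, by rw [hcoset_eq, hz_eq]⟩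
end
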